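/- arXiv:2203.09431 — 5 statements merged into one kernel-verified Lean document; each statement's English description precedes it below -/
import Mathlib

section
/- Let R be a Noetherian integral domain with field of fractions K, let E be a finitely generated free R-module, and let W be a K-linear subspace of K ⊗_R E. Let F := {e ∈ E : e ⊗ 1 ∈ W} be the preimage of W under the canonical map E → K ⊗_R E. Then: (1) the quotient E/F is a torsion-free R-module; (2) W equals the K-linear span of the image of F in K ⊗_R E; (3) F is the unique R-submodule of E with these two properties, i.e. if F' ⊆ E is a submodule such that E/F' is torsion-free and the K-span of the image of F' in K ⊗_R E equals W, then F' = F; and (4) F is a reflexive R-module, i.e. the canonical evaluation map from F to its double R-dual Hom_R(Hom_R(F,R),R) is bijective. -/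
/-!
The canonical map `E → K ⊗[R] E` is a localization at the nonzero elements, so the submodules
of `E` of the form `E ∩ W` are exactly the saturated ones (those with torsion-free quotient), and
`Submodule.localized'gi` is a Galois insertion identifying them with the `K`-subspaces.

For reflexivity of `F = E ∩ W`, take `φ ∈ F**` and view its restriction as an element `x` of
`E** = E`. A functional on `F` extends `K`-linearly to `K ⊗[R] E`, so after clearing a
denominator a nonzero multiple of it extends to `E`; and since `E ⧸ F` embeds in the vector
space `(K ⊗[R] E) ⧸ W`, functionals on `E` separate `F` from points outside it. The second fact
puts `x` in `F`, the first shows that `φ` is evaluation at `x`.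
-/

open TensorProduct Module nonZeroDivisors

theorem Submodule.isTorsionFree_quotient_iff {R E : Type*} [CommRing R] [AddCommGroup E]
    [Module R E] (F : Submodule R E) :
    IsTorsionFree R (E ⧸ F) ↔ ∀ r ∈ R⁰, ∀ e : E, r • e ∈ F → e ∈ F := by
  have key (r : R) : IsSMulRegular (E ⧸ F) r ↔ ∀ e : E, r • e ∈ F → e ∈ F := by
    simp only [isSMulRegular_iff_right_eq_zero_of_smul, F.mkQ_surjective.forall, mkQ_apply,
      ← Quotient.mk_smul, Quotient.mk_eq_zero]
  simp only [← key, ← isRegular_iff_mem_nonZeroDivisors]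
  exact ⟨fun h => h.isSMulRegular, fun h => ⟨h⟩⟩

theorem Module.IsReflexive.of_submodule {R E : Type*} [CommRing R] [AddCommGroup E] [Module R E]
    [IsReflexive R E] (F : Submodule R E)
    (hext : ∀ ψ : Dual R F, ∃ s ∈ R⁰, ∃ ξ : Dual R E, F.subtype.dualMap ξ = s • ψ)
    (hsep : ∀ x ∉ F, ∃ ξ : Dual R E, F ≤ LinearMap.ker ξ ∧ ξ x ≠ 0) :
    IsReflexive R F := by
  refine ⟨⟨fun x y hxy => ?_, fun φ => ?_⟩⟩
  · refine Subtype.ext <| (bijective_dual_eval R E).injective <| LinearMap.ext fun ξ => ?_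
    simpa using congr($hxy (F.subtype.dualMap ξ))
  · obtain ⟨x, hx⟩ := (bijective_dual_eval R E).surjective (F.subtype.dualMap.dualMap φ)
    have hxφ (ξ : Dual R E) : ξ x = φ (F.subtype.dualMap ξ) := by simpa using congr($hx ξ)
    have hxF : x ∈ F := by
      by_contra hxF
      obtain ⟨ξ, hFξ, hξx⟩ := hsep x hxF
      have : F.subtype.dualMap ξ = 0 := LinearMap.ext fun y => hFξ y.2
      exact hξx (by rw [hxφ, this, map_zero])
    refine ⟨⟨x, hxF⟩, LinearMap.ext fun ψ => ?_⟩
    obtain ⟨s, hs, ξ, hξ⟩ := hext ψ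
    have h1 : s * ψ ⟨x, hxF⟩ = s * φ ψ :=
      calc s * ψ ⟨x, hxF⟩ = ξ x := by rw [← smul_eq_mul, ← LinearMap.smul_apply, ← hξ]; rfl
        _ = s * φ ψ := by rw [hxφ, hξ, map_smul, smul_eq_mul]
    exact (mul_cancel_left_mem_nonZeroDivisors hs).mp h1

section Saturation

variable {R K E M : Type*} [CommRing R] [CommRing K] [Algebra R K] [IsFractionRing R K]
  [AddCommGroup E] [Module R E] [AddCommGroup M] [Module R M] [Module K M] [IsScalarTower R K M]
  (f : E →ₗ[R] M)

theorem isTorsionFree_quotient_comap (W : Submodule K M) :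
    IsTorsionFree R (E ⧸ (W.restrictScalars R).comap f) := by
  refine (Submodule.isTorsionFree_quotient_iff _).mpr fun r hr e hre => ?_
  have hunit : IsUnit (algebraMap R K r) := IsLocalization.map_units K ⟨r, hr⟩
  simp only [Submodule.mem_comap, Submodule.restrictScalars_mem, map_smul,
    ← algebraMap_smul K r (f e)] at hre ⊢
  exact (W.smul_mem_iff_of_isUnit hunit).mp hre

variable [IsLocalizedModule R⁰ f]

theorem span_image_comap (W : Submodule K M) :
    Submodule.span K (f '' (W.restrictScalars R).comap f) = W := by
  rw [← Submodule.localized'_eq_span K R⁰]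
  exact (Submodule.localized'gi K R⁰ f).l_u_eq W

theorem comap_span_image (F : Submodule R E) [IsTorsionFree R (E ⧸ F)] :
    ((Submodule.span K (f '' F)).restrictScalars R).comap f = F := by
  refine le_antisymm (fun e he => ?_) fun e he => Submodule.subset_span ⟨e, he, rfl⟩
  rw [Submodule.mem_comap, Submodule.restrictScalars_mem,
    ← Submodule.localized'_eq_span K R⁰, Submodule.mem_localized'] at he
  obtain ⟨m, hm, s, hms⟩ := he
  have hfs : f ((s : R) • e) = f m := by
    rw [map_smul, ← Submonoid.smul_def]
    exact (IsLocalizedModule.mk'_eq_iff.mp hms).symm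
  obtain ⟨c, hc⟩ := IsLocalizedModule.exists_of_eq (S := R⁰) hfs
  refine F.isTorsionFree_quotient_iff.mp ‹_› (c * s) (c * s).2 e ?_
  rw [mul_smul]
  exact hc ▸ F.smul_of_tower_mem c hm

end Saturation

section Functionals

variable {R K E M : Type*} [CommRing R] [Field K] [Algebra R K] [IsFractionRing R K]
  [AddCommGroup E] [Module R E] [AddCommGroup M] [Module R M] [Module K M] [IsScalarTower R K M]

theorem exists_extend_dual_of_isLocalizedModule (f : E →ₗ[R] M) [IsLocalizedModule R⁰ f]
    (F : Submodule R E) (ψ : Dual R F) :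
    ∃ Ψ : M →ₗ[K] K, ∀ y : F, Ψ (f y) = algebraMap R K (ψ y) := by
  have hunit := IsLocalizedModule.map_units (S := R⁰) (Algebra.linearMap R K)
  let g := IsLocalizedModule.lift R⁰ (F.toLocalized' K R⁰ f) (Algebra.linearMap R K ∘ₗ ψ) hunit
  obtain ⟨Ψ, hΨ⟩ := (g.extendScalarsOfIsLocalization R⁰ K).exists_extend
  exact ⟨Ψ, fun y =>
    congr($hΨ (F.toLocalized' K R⁰ f y)).trans (IsLocalizedModule.lift_apply _ _ _ hunit _)⟩

variable [Module.FinitePresentation R E]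

theorem exists_dual_lift_smul (g : E →ₗ[R] K) :
    ∃ (ξ : Dual R E) (s : R⁰), Algebra.linearMap R K ∘ₗ ξ = s • g :=
  Module.FinitePresentation.exists_lift_of_isLocalizedModule R⁰ (Algebra.linearMap R K) g

theorem exists_dual_le_ker_comap (f : E →ₗ[R] M) (W : Submodule K M) {x : E} (hx : f x ∉ W) :
    ∃ ξ : Dual R E, (W.restrictScalars R).comap f ≤ LinearMap.ker ξ ∧ ξ x ≠ 0 := by
  obtain ⟨l, hlx, hlW⟩ := W.exists_dual_map_eq_bot_of_notMem hx inferInstance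
  obtain ⟨ξ, s, hξ⟩ := exists_dual_lift_smul (l.restrictScalars R ∘ₗ f)
  have hξ' (e : E) : algebraMap R K (ξ e) = algebraMap R K s * l (f e) := by
    simpa [Submonoid.smul_def, Algebra.smul_def] using congr($hξ e)
  refine ⟨ξ, fun y hy => IsFractionRing.injective R K ?_, fun h0 => hlx ?_⟩
  · have hly : l (f y) = 0 := (Submodule.mem_bot K).mp (hlW ▸ Submodule.mem_map_of_mem hy)
    rw [hξ', hly, mul_zero, map_zero]
  · simpa [h0, (IsLocalization.map_units K s).ne_zero] using (hξ' x).symm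

end Functionals

theorem Submodule.exists_dualMap_subtype_eq_smul {R E : Type*} [CommRing R] [IsDomain R]
    [AddCommGroup E] [Module R E] [Module.FinitePresentation R E] (F : Submodule R E)
    (ψ : Dual R F) : ∃ s ∈ R⁰, ∃ ξ : Dual R E, F.subtype.dualMap ξ = s • ψ := by
  let K := FractionRing R
  obtain ⟨Ψ, hΨ⟩ := exists_extend_dual_of_isLocalizedModule (K := K) (TensorProduct.mk R K E 1) F ψ
  obtain ⟨ξ, s, hξ⟩ := exists_dual_lift_smul (Ψ.restrictScalars R ∘ₗ TensorProduct.mk R K E 1)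
  refine ⟨s, s.2, ξ, LinearMap.ext fun y => IsFractionRing.injective R K ?_⟩
  have := congr($hξ y)
  simp only [LinearMap.comp_apply, LinearMap.smul_apply, LinearMap.coe_restrictScalars,
    Algebra.linearMap_apply, hΨ] at this
  simp [this, Submonoid.smul_def, Algebra.smul_def]

theorem isReflexive_comap {R K E M : Type*} [CommRing R] [IsDomain R] [Field K] [Algebra R K]
    [IsFractionRing R K] [AddCommGroup E] [Module R E] [Projective R E] [Module.Finite R E]
    [AddCommGroup M] [Module R M] [Module K M] [IsScalarTower R K M] (f : E →ₗ[R] M)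
    (W : Submodule K M) : IsReflexive R ((W.restrictScalars R).comap f) :=
  have := Module.finitePresentation_of_projective R E
  .of_submodule _ (Submodule.exists_dualMap_subtype_eq_smul _) fun _ hx =>
    exists_dual_le_ker_comap f W hx

theorem stmt_0_general (R : Type*) [CommRing R] [IsDomain R]
    (K : Type*) [Field K] [Algebra R K] [IsFractionRing R K]
    (E : Type*) [AddCommGroup E] [Module R E] [Module.Free R E] [Module.Finite R E]
    (W : Submodule K (K ⊗[R] E))
    (f : E →ₗ[R] K ⊗[R] E) (hf : ∀ e : E, f e = 1 ⊗ₜ[R] e)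
    (F : Submodule R E) (hF : F = (W.restrictScalars R).comap f) :
    (∀ (r : R) (q : E ⧸ F), r • q = 0 → r ≠ 0 → q = 0) ∧
    Submodule.span K (f '' (F : Set E)) = W ∧
    (∀ F' : Submodule R E,
      (∀ (r : R) (q : E ⧸ F'), r • q = 0 → r ≠ 0 → q = 0) →
      Submodule.span K (f '' (F' : Set E)) = W → F' = F) ∧
    Module.IsReflexive R F := by
  obtain rfl : f = TensorProduct.mk R K E 1 := LinearMap.ext hf
  subst hF
  have := isTorsionFree_quotient_comap (TensorProduct.mk R K E 1) W
  refine ⟨fun r q hrq hr => (smul_eq_zero_iff_right hr).mp hrq, span_image_comap _ W,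
    fun F' hF' hspan => ?_, isReflexive_comap _ W⟩
  have : IsTorsionFree R (E ⧸ F') :=
    .of_smul_eq_zero fun r q h => or_iff_not_imp_left.2 (hF' r q h)
  rw [← comap_span_image (K := K) (TensorProduct.mk R K E 1) F', hspan]

/-- For a Noetherian integral domain `R` with fraction field `K`, a finite free
`R`-module `E`, and a `K`-subspace `W` of `K ⊗[R] E`, the preimage `F` of `W` under the
canonical map `e ↦ 1 ⊗ e` has torsion-free quotient, `K`-spans `W`, is the unique such
submodule, and is reflexive. -/
theorem stmt_0 (R : Type*) [CommRing R] [IsDomain R] [IsNoetherianRing R]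
    (K : Type*) [Field K] [Algebra R K] [IsFractionRing R K]
    (E : Type*) [AddCommGroup E] [Module R E] [Module.Free R E] [Module.Finite R E]
    (W : Submodule K (K ⊗[R] E))
    (f : E →ₗ[R] K ⊗[R] E) (hf : ∀ e : E, f e = 1 ⊗ₜ[R] e)
    (F : Submodule R E) (hF : F = (W.restrictScalars R).comap f) :
    (∀ (r : R) (q : E ⧸ F), r • q = 0 → r ≠ 0 → q = 0) ∧
    Submodule.span K (f '' (F : Set E)) = W ∧
    (∀ F' : Submodule R E,
      (∀ (r : R) (q : E ⧸ F'), r • q = 0 → r ≠ 0 → q = 0) →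
      Submodule.span K (f '' (F' : Set E)) = W → F' = F) ∧
    Module.IsReflexive R F :=
  stmt_0_general R K E W f hf F hF
end

section
/- Let e, e' be real numbers with 0 < e, 0 < e' < 1 and e' > 2e. Let θ_1 = (1/3, 0), θ_2 = (0, 1/6), b = θ_1 + θ_2 = (1/3, 1/6) and b' = (2−e)θ_1 + (2+e')θ_2 = ((2−e)/3, (2+e')/6) in ℝ². For each of the eight B_2-root functionals r ∈ {x, y, x+y, x+2y, −x, −y, −(x+y), −(x+2y)} on ℝ², one has −⌊min(r(b), r(b'))⌋ = (−⌊r(θ_1)⌋) + (−⌊r(θ_2)⌋); explicitly, both sides equal 0 for the four positive-root functionals, and equal 1, 1, 2, 2 for r = −x, −y, −(x+y), −(x+2y) respectively. Hence the sum concave function 𝓂(r) = m_r(θ_1) + m_r(θ_2) for B_2 coincides with the concave function m_·(Ω) attached to the bounded subset Ω = {b, b'} of the apartment. -/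
private lemma flr (x : ℝ) (n : ℤ) (h1 : (n : ℝ) ≤ x) (h2 : x < n + 1) : ⌊x⌋ = n :=
  Int.floor_eq_iff.mpr ⟨h1, by exact_mod_cast h2⟩

/-- the `B₂` computation.  For `0 < e`, `0 < e' < 1`, `e' > 2e`, with
`θ₁ = (1/3,0)`, `θ₂ = (0,1/6)`, `b = θ₁ + θ₂`, `b' = (2-e)θ₁ + (2+e')θ₂`, for each of the
eight `B₂`-root functionals `r` one has
`-⌊min(r(b), r(b'))⌋ = -⌊r(θ₁)⌋ + -⌊r(θ₂)⌋`, both sides being `0,0,0,0,1,1,2,2`;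
so the sum concave function coincides with the one attached to `Ω = {b, b'}`. -/
theorem stmt_5 (e e' : ℝ) (he : 0 < e) (he' : 0 < e') (he'1 : e' < 1) (hee' : 2 * e < e') :
    let θ₁ : ℝ × ℝ := (1/3, 0)
    let θ₂ : ℝ × ℝ := (0, 1/6)
    let b : ℝ × ℝ := θ₁ + θ₂
    let b' : ℝ × ℝ := (2 - e) • θ₁ + (2 + e') • θ₂
    let roots : Fin 8 → (ℝ × ℝ → ℝ) :=
      ![fun p => p.1, fun p => p.2, fun p => p.1 + p.2, fun p => p.1 + 2 * p.2,
        fun p => -p.1, fun p => -p.2, fun p => -(p.1 + p.2), fun p => -(p.1 + 2 * p.2)]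
    let vals : Fin 8 → ℤ := ![0, 0, 0, 0, 1, 1, 2, 2]
    ∀ i : Fin 8,
      -⌊min (roots i b) (roots i b')⌋ = -⌊roots i θ₁⌋ + -⌊roots i θ₂⌋ ∧
      -⌊min (roots i b) (roots i b')⌋ = vals i := by
  intro θ₁ θ₂ b b' roots vals i
  have he2 : e < 1 / 2 := by linarith
  fin_cases i
  · have h : min ((1:ℝ)/3 + 0) ((2 - e) * (1/3) + (2 + e') * 0) = 1/3 + 0 :=
      min_eq_left (by nlinarith)
    constructor
    · show -⌊min ((1:ℝ)/3 + 0) ((2 - e) * (1/3) + (2 + e') * 0)⌋ = -⌊(1:ℝ)/3⌋ + -⌊(0:ℝ)⌋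
      rw [h, flr _ 0 (by norm_num) (by norm_num), flr ((1:ℝ)/3) 0 (by norm_num) (by norm_num)]
      norm_num
    · show -⌊min ((1:ℝ)/3 + 0) ((2 - e) * (1/3) + (2 + e') * 0)⌋ = 0
      rw [h, flr _ 0 (by norm_num) (by norm_num)]
      norm_num
  · have h : min ((0:ℝ) + 1/6) ((2 - e) * 0 + (2 + e') * (1/6)) = 0 + 1/6 :=
      min_eq_left (by nlinarith)
    constructor
    · show -⌊min ((0:ℝ) + 1/6) ((2 - e) * 0 + (2 + e') * (1/6))⌋ = -⌊(0:ℝ)⌋ + -⌊(1:ℝ)/6⌋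
      rw [h, flr _ 0 (by norm_num) (by norm_num), flr ((1:ℝ)/6) 0 (by norm_num) (by norm_num)]
      norm_num
    · show -⌊min ((0:ℝ) + 1/6) ((2 - e) * 0 + (2 + e') * (1/6))⌋ = 0
      rw [h, flr _ 0 (by norm_num) (by norm_num)]
      norm_num
  · have h : min (((1:ℝ)/3 + 0) + (0 + 1/6))
        (((2 - e) * (1/3) + (2 + e') * 0) + ((2 - e) * 0 + (2 + e') * (1/6)))
        = (1/3 + 0) + (0 + 1/6) := min_eq_left (by nlinarith)
    constructor
    · show -⌊min (((1:ℝ)/3 + 0) + (0 + 1/6))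
          (((2 - e) * (1/3) + (2 + e') * 0) + ((2 - e) * 0 + (2 + e') * (1/6)))⌋
          = -⌊(1:ℝ)/3 + 0⌋ + -⌊(0:ℝ) + 1/6⌋
      rw [h, flr _ 0 (by norm_num) (by norm_num), flr ((1:ℝ)/3 + 0) 0 (by norm_num) (by norm_num),
        flr ((0:ℝ) + 1/6) 0 (by norm_num) (by norm_num)]
      norm_num
    · show -⌊min (((1:ℝ)/3 + 0) + (0 + 1/6))
          (((2 - e) * (1/3) + (2 + e') * 0) + ((2 - e) * 0 + (2 + e') * (1/6)))⌋ = 0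
      rw [h, flr _ 0 (by norm_num) (by norm_num)]
      norm_num
  · have h : min (((1:ℝ)/3 + 0) + 2 * (0 + 1/6))
        (((2 - e) * (1/3) + (2 + e') * 0) + 2 * ((2 - e) * 0 + (2 + e') * (1/6)))
        = (1/3 + 0) + 2 * (0 + 1/6) := min_eq_left (by nlinarith)
    constructor
    · show -⌊min (((1:ℝ)/3 + 0) + 2 * (0 + 1/6))
          (((2 - e) * (1/3) + (2 + e') * 0) + 2 * ((2 - e) * 0 + (2 + e') * (1/6)))⌋
          = -⌊(1:ℝ)/3 + 2 * 0⌋ + -⌊(0:ℝ) + 2 * (1/6)⌋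
      rw [h, flr _ 0 (by norm_num) (by norm_num), flr ((1:ℝ)/3 + 2 * 0) 0 (by norm_num) (by norm_num),
        flr ((0:ℝ) + 2 * (1/6)) 0 (by norm_num) (by norm_num)]
      norm_num
    · show -⌊min (((1:ℝ)/3 + 0) + 2 * (0 + 1/6))
          (((2 - e) * (1/3) + (2 + e') * 0) + 2 * ((2 - e) * 0 + (2 + e') * (1/6)))⌋ = 0
      rw [h, flr _ 0 (by norm_num) (by norm_num)]
      norm_num
  · have h : min (-((1:ℝ)/3 + 0)) (-((2 - e) * (1/3) + (2 + e') * 0))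
        = -((2 - e) * (1/3) + (2 + e') * 0) := min_eq_right (by nlinarith)
    have hf : ⌊-((2 - e) * ((1:ℝ)/3) + (2 + e') * 0)⌋ = -1 :=
      flr _ (-1) (by push_cast; nlinarith) (by push_cast; nlinarith)
    constructor
    · show -⌊min (-((1:ℝ)/3 + 0)) (-((2 - e) * (1/3) + (2 + e') * 0))⌋
          = -⌊-((1:ℝ)/3)⌋ + -⌊-(0:ℝ)⌋
      rw [h, hf, flr (-((1:ℝ)/3)) (-1) (by norm_num) (by norm_num)]
      norm_num
    · show -⌊min (-((1:ℝ)/3 + 0)) (-((2 - e) * (1/3) + (2 + e') * 0))⌋ = 1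
      rw [h, hf]
      norm_num
  · have h : min (-((0:ℝ) + 1/6)) (-((2 - e) * 0 + (2 + e') * (1/6)))
        = -((2 - e) * 0 + (2 + e') * (1/6)) := min_eq_right (by nlinarith)
    have hf : ⌊-((2 - e) * (0:ℝ) + (2 + e') * (1/6))⌋ = -1 :=
      flr _ (-1) (by push_cast; nlinarith) (by push_cast; nlinarith)
    constructor
    · show -⌊min (-((0:ℝ) + 1/6)) (-((2 - e) * 0 + (2 + e') * (1/6)))⌋
          = -⌊-(0:ℝ)⌋ + -⌊-((1:ℝ)/6)⌋
      rw [h, hf, flr (-((1:ℝ)/6)) (-1) (by norm_num) (by norm_num)]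
      norm_num
    · show -⌊min (-((0:ℝ) + 1/6)) (-((2 - e) * 0 + (2 + e') * (1/6)))⌋ = 1
      rw [h, hf]
      norm_num
  · have h : min (-(((1:ℝ)/3 + 0) + (0 + 1/6)))
        (-(((2 - e) * (1/3) + (2 + e') * 0) + ((2 - e) * 0 + (2 + e') * (1/6))))
        = -(((2 - e) * (1/3) + (2 + e') * 0) + ((2 - e) * 0 + (2 + e') * (1/6))) :=
      min_eq_right (by nlinarith)
    have hf : ⌊-(((2 - e) * ((1:ℝ)/3) + (2 + e') * 0) + ((2 - e) * 0 + (2 + e') * (1/6)))⌋ = -2 :=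
      flr _ (-2) (by push_cast; nlinarith) (by push_cast; nlinarith)
    constructor
    · show -⌊min (-(((1:ℝ)/3 + 0) + (0 + 1/6)))
          (-(((2 - e) * (1/3) + (2 + e') * 0) + ((2 - e) * 0 + (2 + e') * (1/6))))⌋
          = -⌊-((1:ℝ)/3 + 0)⌋ + -⌊-((0:ℝ) + 1/6)⌋
      rw [h, hf, flr (-((1:ℝ)/3 + 0)) (-1) (by norm_num) (by norm_num),
        flr (-((0:ℝ) + 1/6)) (-1) (by norm_num) (by norm_num)]
      norm_num
    · show -⌊min (-(((1:ℝ)/3 + 0) + (0 + 1/6)))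
          (-(((2 - e) * (1/3) + (2 + e') * 0) + ((2 - e) * 0 + (2 + e') * (1/6))))⌋ = 2
      rw [h, hf]
      norm_num
  · have h : min (-(((1:ℝ)/3 + 0) + 2 * (0 + 1/6)))
        (-(((2 - e) * (1/3) + (2 + e') * 0) + 2 * ((2 - e) * 0 + (2 + e') * (1/6))))
        = -(((2 - e) * (1/3) + (2 + e') * 0) + 2 * ((2 - e) * 0 + (2 + e') * (1/6))) :=
      min_eq_right (by nlinarith)
    have hf : ⌊-(((2 - e) * ((1:ℝ)/3) + (2 + e') * 0) + 2 * ((2 - e) * 0 + (2 + e') * (1/6)))⌋ = -2 :=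
      flr _ (-2) (by push_cast; nlinarith) (by push_cast; nlinarith)
    constructor
    · show -⌊min (-(((1:ℝ)/3 + 0) + 2 * (0 + 1/6)))
          (-(((2 - e) * (1/3) + (2 + e') * 0) + 2 * ((2 - e) * 0 + (2 + e') * (1/6))))⌋
          = -⌊-((1:ℝ)/3 + 2 * 0)⌋ + -⌊-((0:ℝ) + 2 * (1/6))⌋
      rw [h, hf, flr (-((1:ℝ)/3 + 2 * 0)) (-1) (by norm_num) (by norm_num),
        flr (-((0:ℝ) + 2 * (1/6))) (-1) (by norm_num) (by norm_num)]
      norm_num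
    · show -⌊min (-(((1:ℝ)/3 + 0) + 2 * (0 + 1/6)))
          (-(((2 - e) * (1/3) + (2 + e') * 0) + 2 * ((2 - e) * 0 + (2 + e') * (1/6))))⌋ = 2
      rw [h, hf]
      norm_num
end

section
/- There does not exist a nonempty bounded subset Ω ⊆ ℝ² such that, with m_r(Ω) := −⌊inf_{θ∈Ω} r(θ)⌋ for linear functionals r on ℝ², one has m_r(Ω) = 0 for each of the six G_2 positive-root functionals r ∈ {x, y, x+y, 2x+y, 3x+y, 3x+2y}, and simultaneously m_{−x}(Ω) = 1, m_{−y}(Ω) = 1, m_{−(x+y)}(Ω) = 2, m_{−(2x+y)}(Ω) = 2, m_{−(3x+y)}(Ω) = 2, m_{−(3x+2y)}(Ω) = 2. In other words, the concave function 𝓂 of G_2 taking value 0 on all positive roots and values 1, 1, 2, 2, 2, 2 on −α_1, −α_2, −(α_1+α_2), −(2α_1+α_2), −(3α_1+α_2), −(3α_1+2α_2) does not arise from any bounded region of the apartment (it is of type III but not of type II). -/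
/-- the `G₂` concave function `𝓂` (value `0` on the six positive-root
functionals and `1,1,2,2,2,2` on their negatives) does not arise from any nonempty bounded
region `Ω` of the apartment via `m_r(Ω) = -⌊inf_{θ∈Ω} r(θ)⌋`. -/
theorem stmt_6 :
    ¬ ∃ Ω : Set (ℝ × ℝ), Ω.Nonempty ∧ Bornology.IsBounded Ω ∧
      -⌊sInf ((fun p : ℝ × ℝ => p.1) '' Ω)⌋ = 0 ∧
      -⌊sInf ((fun p : ℝ × ℝ => p.2) '' Ω)⌋ = 0 ∧
      -⌊sInf ((fun p : ℝ × ℝ => p.1 + p.2) '' Ω)⌋ = 0 ∧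
      -⌊sInf ((fun p : ℝ × ℝ => 2 * p.1 + p.2) '' Ω)⌋ = 0 ∧
      -⌊sInf ((fun p : ℝ × ℝ => 3 * p.1 + p.2) '' Ω)⌋ = 0 ∧
      -⌊sInf ((fun p : ℝ × ℝ => 3 * p.1 + 2 * p.2) '' Ω)⌋ = 0 ∧
      -⌊sInf ((fun p : ℝ × ℝ => -p.1) '' Ω)⌋ = 1 ∧
      -⌊sInf ((fun p : ℝ × ℝ => -p.2) '' Ω)⌋ = 1 ∧
      -⌊sInf ((fun p : ℝ × ℝ => -(p.1 + p.2)) '' Ω)⌋ = 2 ∧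
      -⌊sInf ((fun p : ℝ × ℝ => -(2 * p.1 + p.2)) '' Ω)⌋ = 2 ∧
      -⌊sInf ((fun p : ℝ × ℝ => -(3 * p.1 + p.2)) '' Ω)⌋ = 2 ∧
      -⌊sInf ((fun p : ℝ × ℝ => -(3 * p.1 + 2 * p.2)) '' Ω)⌋ = 2 := by
  rintro ⟨Ω, ⟨p0, hp0⟩, hB, h1, h2, h3, h4, h5, h6, h7, h8, h9, h10, h11, h12⟩
  obtain ⟨R, hR⟩ := hB.subset_closedBall 0
  have hcoord : ∀ p ∈ Ω, |p.1| ≤ R ∧ |p.2| ≤ R := by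
    intro p hp
    have := hR hp
    rw [Metric.mem_closedBall, dist_zero_right, Prod.norm_def] at this
    constructor
    · exact le_trans (le_max_left _ _) this
    · exact le_trans (le_max_right _ _) this
  have hbdd1 : BddBelow ((fun p : ℝ × ℝ => p.1) '' Ω) := by
    refine ⟨-R, ?_⟩
    rintro s ⟨p, hp, rfl⟩
    have := (hcoord p hp).1
    have := abs_le.mp this
    linarith [this.1]
  have hbdd12 : BddBelow ((fun p : ℝ × ℝ => -(3 * p.1 + 2 * p.2)) '' Ω) := by
    refine ⟨-(5 * R), ?_⟩
    rintro s ⟨p, hp, rfl⟩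
    have h1' := abs_le.mp (hcoord p hp).1
    have h2' := abs_le.mp (hcoord p hp).2
    simp only
    linarith [h1'.2, h2'.2]
  -- From h9 : floor of sInf(-(x+y)) = -2, so sInf < -1, get point with x+y > 1
  have hf9 : ⌊sInf ((fun p : ℝ × ℝ => -(p.1 + p.2)) '' Ω)⌋ = -2 := by omega
  have hlt : sInf ((fun p : ℝ × ℝ => -(p.1 + p.2)) '' Ω) < -1 := by
    have := Int.lt_floor_add_one (sInf ((fun p : ℝ × ℝ => -(p.1 + p.2)) '' Ω))
    rw [hf9] at this
    push_cast at this
    linarith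
  obtain ⟨s, ⟨θ, hθ, rfl⟩, hs⟩ :=
    exists_lt_of_csInf_lt (Set.Nonempty.image _ ⟨p0, hp0⟩) hlt
  -- θ.1 + θ.2 > 1
  have hsum : θ.1 + θ.2 > 1 := by simp only at hs; linarith
  -- θ.1 ≥ 0 from h1
  have hf1 : ⌊sInf ((fun p : ℝ × ℝ => p.1) '' Ω)⌋ = 0 := by omega
  have hx0 : (0 : ℝ) ≤ sInf ((fun p : ℝ × ℝ => p.1) '' Ω) := by
    have := Int.floor_le (sInf ((fun p : ℝ × ℝ => p.1) '' Ω))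
    rw [hf1] at this; push_cast at this; linarith
  have hx : (0 : ℝ) ≤ θ.1 :=
    le_trans hx0 (csInf_le hbdd1 ⟨θ, hθ, rfl⟩)
  -- 3θ.1 + 2θ.2 ≤ 2 from h12
  have hf12 : ⌊sInf ((fun p : ℝ × ℝ => -(3 * p.1 + 2 * p.2)) '' Ω)⌋ = -2 := by omega
  have h2le : (-2 : ℝ) ≤ sInf ((fun p : ℝ × ℝ => -(3 * p.1 + 2 * p.2)) '' Ω) := by
    have := Int.floor_le (sInf ((fun p : ℝ × ℝ => -(3 * p.1 + 2 * p.2)) '' Ω))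
    rw [hf12] at this; push_cast at this; linarith
  have hθ12 : -(3 * θ.1 + 2 * θ.2) ≥ -2 :=
    le_trans h2le (csInf_le hbdd12 ⟨θ, hθ, rfl⟩)
  linarith
end

section
/- Let E be a real inner product space and let Φ ⊆ E be a finite set of nonzero vectors such that Φ = −Φ and such that whenever r, s ∈ Φ and s = c·r for some real c > 0, then s = r. For a nonempty finite subset Ω ⊆ E define f_Ω : Φ → ℝ by f_Ω(r) := −min_{θ∈Ω} ⟨r, θ⟩. Then the ℝ-linear span of the set {f_Ω : Ω a nonempty finite subset of E}, inside the space of all functions Φ → ℝ, is the whole space. Equivalently, the convex cone generated by the functions f_Ω has dimension |Φ|. -/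
/-!
Every `f_Ω` with `Ω = {0, -y, -x}` is `r ↦ max (max 0 ⟪r, y⟫) ⟪r, x⟫`. Fix `s ∈ Φ` and take the
second difference of such functions in `x`, at `x = v` in the direction `t • s`. At `r` it vanishes
for small `t` unless `⟪r, v⟫ = max 0 ⟪r, y⟫`, where it equals `t * |⟪r, s⟫|`. Choosing `v ⊥ s`
with `⟪r, v⟫ ≠ 0` for every `r ∈ Φ` off the line `ℝ ∙ s`, and `y = -(c • s)` with `c` large, this
tie happens on `Φ` only at `r = s`: roots `r ≠ s` with `⟪r, s⟫ ≥ 0` are off the line because `Φ`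
is reduced, and for the others `max 0 ⟪r, y⟫ = -c ⟪r, s⟫` exceeds `⟪r, v⟫`. So every indicator
function of a point of `Φ` is in the span.
-/

open Filter Topology
open scoped RealInnerProductSpace

lemma max_add_max_sub_eq_two_mul_max {M A d : ℝ} (h : |d| ≤ |A - M|) :
    max M (A + d) + max M (A - d) = 2 * max M A := by
  grind [abs_le, abs_cases]

lemma max_add_max_sub_self (M d : ℝ) : max M (M + d) + max M (M - d) = 2 * M + |d| := by
  grind [abs_cases]

section

variable {E : Type*} [NormedAddCommGroup E] [InnerProductSpace ℝ E]

lemma exists_mem_orthogonal_forall_inner_ne_zero {ι : Type*} [Finite ι] (K : Submodule ℝ E)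
    [K.HasOrthogonalProjection] (r : ι → E) (hr : ∀ i, r i ∉ K) :
    ∃ v ∈ Kᗮ, ∀ i, ⟪r i, v⟫ ≠ 0 := by
  refine Module.Dual.exists_forall_mem_ne_zero_of_forall_exists Kᗮ (fun i => innerₛₗ ℝ (r i))
    fun i => ?_
  by_contra! h
  refine hr i (K.orthogonal_orthogonal ▸ (Submodule.mem_orthogonal _ _).2 fun u hu => ?_)
  rw [real_inner_comm]
  exact h u hu

def concaveSpan (Φ : Finset E) : Submodule ℝ (Φ → ℝ) :=
  Submodule.span ℝ {f : ↥Φ → ℝ |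
      ∃ (Ω : Finset E) (hΩ : Ω.Nonempty),
        f = fun r : ↥Φ => -(Ω.inf' hΩ fun θ => (inner ℝ (r : E) θ : ℝ))}

variable {Φ : Finset E}

lemma max_max_inner_mem_concaveSpan (x y : E) :
    (fun r : Φ => max (max 0 ⟪(r : E), y⟫) ⟪(r : E), x⟫) ∈ concaveSpan Φ := by
  classical
  refine Submodule.subset_span ⟨{0, -y, -x}, by simp, funext fun r => ?_⟩
  simp only [Finset.insert_nonempty, Finset.singleton_nonempty, Finset.inf'_insert,
    Finset.inf'_singleton, inner_zero_right, inner_neg_right]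
  grind

lemma single_mem_concaveSpan [DecidableEq E] {s : Φ} {v y : E} {t : ℝ} (ht : 0 < t)
    (hs : (s : E) ≠ 0) (hsv : ⟪(s : E), v⟫ = max 0 ⟪(s : E), y⟫)
    (hr : ∀ r ∈ Φ, r ≠ s → |t * ⟪r, s⟫| ≤ |⟪r, v⟫ - max 0 ⟪r, y⟫|) :
    Pi.single s 1 ∈ concaveSpan Φ := by
  set g : E → Φ → ℝ := fun x r => max (max 0 ⟪(r : E), y⟫) ⟪(r : E), x⟫
  have hsecond : g (v + t • s) + g (v - t • s) - (2 : ℝ) • g v =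
      (t * ‖(s : E)‖ ^ 2) • Pi.single s 1 := by
    funext r
    simp only [g, Pi.add_apply, Pi.sub_apply, Pi.smul_apply, smul_eq_mul, inner_add_right,
      inner_sub_right, real_inner_smul_right, Pi.single_apply]
    split_ifs with hrs
    · subst hrs
      rw [← hsv, max_self, max_add_max_sub_self, real_inner_self_eq_norm_sq,
        abs_of_pos (by positivity)]
      ring
    · rw [max_add_max_sub_eq_two_mul_max (hr r r.2 (Subtype.coe_injective.ne hrs))]
      ring
  have hmem : g (v + t • s) + g (v - t • s) - (2 : ℝ) • g v ∈ concaveSpan Φ :=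
    sub_mem (add_mem (max_max_inner_mem_concaveSpan _ _) (max_max_inner_mem_concaveSpan _ _))
      (Submodule.smul_mem _ _ (max_max_inner_mem_concaveSpan _ _))
  rw [hsecond] at hmem
  exact (Submodule.smul_mem_iff _ (by positivity)).1 hmem

lemma notMem_span_singleton_of_inner_nonneg (h0 : ∀ r ∈ Φ, r ≠ 0)
    (hred : ∀ r ∈ Φ, ∀ s ∈ Φ, ∀ c : ℝ, 0 < c → s = c • r → s = r) {r s : E} (hr : r ∈ Φ)
    (hs : s ∈ Φ) (hrs : r ≠ s) (hb : 0 ≤ ⟪r, s⟫) : r ∉ ℝ ∙ s := by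
  intro hmem
  obtain ⟨c, rfl⟩ := Submodule.mem_span_singleton.1 hmem
  rcases lt_trichotomy c 0 with hc | rfl | hc
  · rw [real_inner_smul_left] at hb
    nlinarith [real_inner_self_pos.2 (h0 s hs)]
  · exact h0 _ hr (zero_smul ℝ s)
  · exact hrs (hred s hs _ hr c hc rfl)

lemma exists_isolating_hinge (h0 : ∀ r ∈ Φ, r ≠ 0)
    (hred : ∀ r ∈ Φ, ∀ s ∈ Φ, ∀ c : ℝ, 0 < c → s = c • r → s = r) {s : E} (hs : s ∈ Φ) :
    ∃ v y : E, ∃ t > 0, ⟪s, v⟫ = max 0 ⟪s, y⟫ ∧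
      ∀ r ∈ Φ, r ≠ s → |t * ⟪r, s⟫| ≤ |⟪r, v⟫ - max 0 ⟪r, y⟫| := by
  obtain ⟨v, hv, hvr⟩ := exists_mem_orthogonal_forall_inner_ne_zero (ℝ ∙ s)
    (fun r : {r : Φ // (r : E) ∉ ℝ ∙ s} => (r : E)) fun r => r.2
  have hsv : ⟪s, v⟫ = 0 := Submodule.mem_orthogonal_singleton_iff_inner_right.1 hv
  obtain ⟨c, hc, hcr⟩ : ∃ c : ℝ, 0 ≤ c ∧ ∀ r ∈ Φ, r ≠ s → ⟪r, v⟫ ≠ max 0 (-(c * ⟪r, s⟫)) := by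
    refine ((eventually_ge_atTop 0).and ((eventually_all_finset Φ).2 fun r hr => ?_)).exists
    rcases le_or_gt 0 ⟪r, s⟫ with hb | hb
    · filter_upwards [eventually_ge_atTop 0] with c hc hrs
      rw [max_eq_left (by nlinarith)]
      exact hvr ⟨⟨r, hr⟩, notMem_span_singleton_of_inner_nonneg h0 hred hr hs hrs hb⟩
    · filter_upwards [(tendsto_id.atTop_mul_const (neg_pos.2 hb)).eventually_gt_atTop ⟪r, v⟫]
        with c hc _
      exact (hc.trans_le ((mul_neg c _).symm ▸ le_max_right _ _)).ne
  have hy : ∀ r : E, ⟪r, -(c • s)⟫ = -(c * ⟪r, s⟫) := fun r => by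
    rw [inner_neg_right, real_inner_smul_right]
  obtain ⟨t, ht, htr⟩ : ∃ t > (0 : ℝ), ∀ r ∈ Φ, r ≠ s →
      |t * ⟪r, s⟫| ≤ |⟪r, v⟫ - max 0 (-(c * ⟪r, s⟫))| := by
    refine ((eventually_mem_nhdsWithin (a := 0) (s := Set.Ioi 0)).and
      (eventually_nhdsWithin_of_eventually_nhds
        ((eventually_all_finset Φ).2 fun r hr => ?_))).exists
    by_cases hrs : r = s
    · exact Eventually.of_forall fun _ h => absurd hrs h
    have hgap : 0 < |⟪r, v⟫ - max 0 (-(c * ⟪r, s⟫))| := abs_pos.2 (sub_ne_zero.2 (hcr r hr hrs))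
    filter_upwards [((by fun_prop : Continuous fun t : ℝ => |t * ⟪r, s⟫|).tendsto' 0 0
      (by simp)).eventually (ge_mem_nhds hgap)] with t ht _
    exact ht
  refine ⟨v, -(c • s), t, ht, ?_, fun r hr hrs => ?_⟩
  · rw [hsv, hy, real_inner_self_eq_norm_sq, max_eq_left (by nlinarith)]
  · rw [hy]
    exact htr r hr hrs

end

theorem stmt_8_general (E : Type*) [NormedAddCommGroup E] [InnerProductSpace ℝ E]
    (Φ : Finset E) (h0 : ∀ r ∈ Φ, r ≠ 0)
    (hred : ∀ r ∈ Φ, ∀ s ∈ Φ, ∀ c : ℝ, 0 < c → s = c • r → s = r) :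
    Submodule.span ℝ {f : ↥Φ → ℝ |
      ∃ (Ω : Finset E) (hΩ : Ω.Nonempty),
        f = fun r : ↥Φ => -(Ω.inf' hΩ fun θ => (inner ℝ (r : E) θ : ℝ))} = ⊤ := by
  classical
  change concaveSpan Φ = ⊤
  refine eq_top_iff.2 ((Pi.basisFun ℝ Φ).span_eq.ge.trans (Submodule.span_le.2 ?_))
  rintro _ ⟨s, rfl⟩
  obtain ⟨v, y, t, ht, hsv, hr⟩ := exists_isolating_hinge h0 hred s.2
  rw [Pi.basisFun_apply]
  exact single_mem_concaveSpan ht (h0 s s.2) hsv hr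

/-- let `Φ` be a finite symmetric set of nonzero vectors of a real inner
product space, reduced in the sense that positively proportional members coincide.  For a
nonempty finite `Ω ⊆ E` let `f_Ω : Φ → ℝ` be `f_Ω(r) = -min_{θ∈Ω} ⟨r,θ⟩`.  Then the
functions `f_Ω` span the whole space of functions `Φ → ℝ`. -/
theorem stmt_8 (E : Type*) [NormedAddCommGroup E] [InnerProductSpace ℝ E]
    (Φ : Finset E) (h0 : ∀ r ∈ Φ, r ≠ 0) (hsymm : ∀ r ∈ Φ, -r ∈ Φ)
    (hred : ∀ r ∈ Φ, ∀ s ∈ Φ, ∀ c : ℝ, 0 < c → s = c • r → s = r) :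
    Submodule.span ℝ {f : ↥Φ → ℝ |
      ∃ (Ω : Finset E) (hΩ : Ω.Nonempty),
        f = fun r : ↥Φ => -(Ω.inf' hΩ fun θ => (inner ℝ (r : E) θ : ℝ))} = ⊤ :=
  stmt_8_general E Φ h0 hred
end

section
/- Let n ≥ 1 and let Φ = {e_i − e_j : 0 ≤ i, j ≤ n, i ≠ j} ⊂ ℝ^{n+1} be the root system of type A_n, where e_0, …, e_n is the standard orthonormal basis. Then for every α ∈ Φ there is no finite family α_1, …, α_r ∈ Φ (r ≥ 1) together with real numbers λ_1, …, λ_r satisfying 0 < λ_i < 1 for all i, such that: the vectors α_1, …, α_r are linearly independent; for all i ≠ j one has ⟨α_i, α_j⟩ ≥ 0 and α_i + α_j ∉ Φ; and ∑_{i=1}^r λ_i α_i = α. (Equivalently, the restricted set S′(α) of Courtès is empty for every root α of a type A_n root system.) -/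
/-!
Write the roots as `αᵢ = e_{Pᵢ} - e_{Qᵢ}` and `α = e_p - e_q`. Since `⟨e_i - e_j, e_k - e_i⟩ < 0`
for `i ≠ j`, `k ≠ i`, pairwise non-negative inner products force every head `Pᵢ` to differ from
every tail `Qⱼ`. The coordinate of `∑ λᵢ αᵢ` at a head is then a positive sum of coefficients,
hence that head is `p`; symmetrically every tail is `q`. Thus all `αᵢ` equal `α`, linear
independence leaves at most one of them, and `∑ λᵢ = 1` contradicts `λᵢ < 1`.
-/

open Finset

theorem Fintype.sum_eq_one_of_sum_smul_eq_self {κ M : Type*} [Fintype κ] [AddCommGroup M]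
    [Module ℝ M] [NoZeroSMulDivisors ℝ M] {lam : κ → ℝ} {v : M} (hv : v ≠ 0)
    (h : ∑ x, lam x • v = v) : ∑ x, lam x = 1 :=
  smul_left_injective ℝ hv (by simpa only [sum_smul, one_smul] using h)

theorem Fintype.sum_lt_one_of_subsingleton {κ : Type*} [Fintype κ] [Subsingleton κ]
    {lam : κ → ℝ} (h : ∀ x, lam x < 1) : ∑ x, lam x < 1 := by
  rcases isEmpty_or_nonempty κ with _ | ⟨⟨x⟩⟩
  · simp
  · rw [Fintype.sum_subsingleton lam x]
    exact h x

namespace TypeARoot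

variable {ι : Type*} [DecidableEq ι]

noncomputable def root (i j : ι) : EuclideanSpace ℝ ι :=
  EuclideanSpace.single i 1 - EuclideanSpace.single j 1

theorem root_apply (i j k : ι) :
    root i j k = (if k = i then 1 else 0) - (if k = j then 1 else 0) := by
  simp [root, PiLp.single_apply]

theorem neg_root (i j : ι) : -root i j = root j i := by
  simp [root]

theorem root_ne_zero {i j : ι} (hij : i ≠ j) : root i j ≠ 0 := by
  intro h
  simpa [root_apply, hij] using congrArg (· i) h

theorem ne_of_inner_root_root_nonneg [Fintype ι] {i j k l : ι} (hij : i ≠ j) (hkl : k ≠ l)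
    (h : 0 ≤ inner ℝ (root i j) (root k l)) : i ≠ l := by
  rintro rfl
  simp only [root, inner_sub_left, inner_sub_right, EuclideanSpace.inner_single_left,
    PiLp.single_apply] at h
  split_ifs at h <;> simp_all <;> norm_num at h

theorem eq_of_root_apply_pos {p q k : ι} (h : 0 < root p q k) : k = p := by
  by_contra hkp
  rw [root_apply, if_neg hkp] at h
  split_ifs at h <;> linarith

variable {κ : Type*} [Fintype κ] {P Q : κ → ι} {lam : κ → ℝ}

theorem sum_smul_root_apply_pos (hlam : ∀ x, 0 < lam x) {x₀ : κ} (htail : ∀ x, P x₀ ≠ Q x) :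
    0 < (∑ x, lam x • root (P x) (Q x)) (P x₀) := by
  rw [WithLp.ofLp_sum, Finset.sum_apply]
  refine sum_pos' (fun x _ => ?_) ⟨x₀, mem_univ _, ?_⟩ <;>
    simp only [PiLp.smul_apply, smul_eq_mul, root_apply, if_neg (htail _)]
  · split_ifs <;> linarith [hlam x]
  · simpa using hlam x₀

theorem head_eq_of_sum_smul_root_eq (hlam : ∀ x, 0 < lam x) (hPQ : ∀ x y, P x ≠ Q y)
    {p q : ι} (hsum : ∑ x, lam x • root (P x) (Q x) = root p q) (x : κ) : P x = p :=
  eq_of_root_apply_pos (hsum ▸ sum_smul_root_apply_pos hlam (hPQ x))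

theorem tail_eq_of_sum_smul_root_eq (hlam : ∀ x, 0 < lam x) (hPQ : ∀ x y, P x ≠ Q y)
    {p q : ι} (hsum : ∑ x, lam x • root (P x) (Q x) = root p q) (x : κ) : Q x = q := by
  refine head_eq_of_sum_smul_root_eq (P := Q) (Q := P) (q := p) hlam
    (fun x y => (hPQ y x).symm) ?_ x
  calc ∑ x, lam x • root (Q x) (P x) = -∑ x, lam x • root (P x) (Q x) := by
        simp only [← neg_root (P _), smul_neg, sum_neg_distrib]
    _ = root q p := by rw [hsum, neg_root]

end TypeARoot

open TypeARoot in
theorem stmt_11_general (n : ℕ) :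
    let Φ : Set (EuclideanSpace ℝ (Fin (n + 1))) :=
      {v | ∃ i j : Fin (n + 1), i ≠ j ∧
        v = EuclideanSpace.single i (1 : ℝ) - EuclideanSpace.single j (1 : ℝ)};
    ∀ α ∈ Φ,
      ¬ ∃ (r : ℕ) (_ : 1 ≤ r) (a : Fin r → EuclideanSpace ℝ (Fin (n + 1)))
          (lam : Fin r → ℝ),
        (∀ i, a i ∈ Φ) ∧
        (∀ i, 0 < lam i ∧ lam i < 1) ∧
        LinearIndependent ℝ a ∧
        (∀ i j : Fin r, i ≠ j →
          0 ≤ (inner ℝ (a i) (a j) : ℝ) ∧ a i + a j ∉ Φ) ∧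
        (∑ i, lam i • a i) = α := by
  rintro Φ _ ⟨p, q, hpq, rfl⟩ ⟨r, -, a, lam, hΦ, hlam, hli, hpair, hsum⟩
  choose P Q hne ha using hΦ
  replace ha : ∀ x, a x = root (P x) (Q x) := ha
  replace hsum : ∑ x, lam x • a x = root p q := hsum
  have hPQ : ∀ x y, P x ≠ Q y := by
    intro x y
    rcases eq_or_ne x y with rfl | hxy
    · exact hne x
    · exact ne_of_inner_root_root_nonneg (hne x) (hne y) (ha x ▸ ha y ▸ (hpair x y hxy).1)
  have hpos : ∀ x, 0 < lam x := fun x => (hlam x).1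
  have hroots : ∑ x, lam x • root (P x) (Q x) = root p q := by simpa only [ha] using hsum
  have hconst : ∀ x, a x = root p q := fun x => by
    rw [ha, head_eq_of_sum_smul_root_eq hpos hPQ hroots,
      tail_eq_of_sum_smul_root_eq hpos hPQ hroots]
  have hone : ∑ x, lam x = 1 :=
    Fintype.sum_eq_one_of_sum_smul_eq_self (root_ne_zero hpq) (by simpa only [hconst] using hsum)
  have : Subsingleton (Fin r) := ⟨fun x y => hli.injective ((hconst x).trans (hconst y).symm)⟩
  exact (Fintype.sum_lt_one_of_subsingleton fun x => (hlam x).2).ne hone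

/-- for the type `Aₙ` root system
`Φ = {eᵢ - eⱼ : i ≠ j} ⊆ ℝ^{n+1}` (n ≥ 1), for every root `α` there is no finite family
`α₁, …, α_r ∈ Φ` with coefficients `0 < λᵢ < 1` such that the `αᵢ` are linearly
independent, pairwise `⟨αᵢ, αⱼ⟩ ≥ 0` with `αᵢ + αⱼ ∉ Φ`, and `∑ λᵢ αᵢ = α`
(Courtès' set `S′(α)` is empty). -/
theorem stmt_11 (n : ℕ) (hn : 1 ≤ n) :
    let Φ : Set (EuclideanSpace ℝ (Fin (n + 1))) :=
      {v | ∃ i j : Fin (n + 1), i ≠ j ∧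
        v = EuclideanSpace.single i (1 : ℝ) - EuclideanSpace.single j (1 : ℝ)};
    ∀ α ∈ Φ,
      ¬ ∃ (r : ℕ) (_ : 1 ≤ r) (a : Fin r → EuclideanSpace ℝ (Fin (n + 1)))
          (lam : Fin r → ℝ),
        (∀ i, a i ∈ Φ) ∧
        (∀ i, 0 < lam i ∧ lam i < 1) ∧
        LinearIndependent ℝ a ∧
        (∀ i j : Fin r, i ≠ j →
          0 ≤ (inner ℝ (a i) (a j) : ℝ) ∧ a i + a j ∉ Φ) ∧
        (∑ i, lam i • a i) = α :=
  stmt_11_general n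
end
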